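/- Fix κ > 0 and u₀ > 0, and let δ > 0. Let u = u(·; u₀) and u_δ = u(·; u₀ + δ) be solutions of u' = v/√(1+v²), v' = κu with initial values u₀ and u₀ + δ respectively (and v(0) = 0 in both cases). Then u_δ(r) - δ > u(r) for all r ≠ 0. -/

import Mathlib

/-!
Put `W = u_δ - u` and `Z = v_δ - v`. Then `Z' = κ W`, and `W' = F(v_δ) - F(v)` with
`F x = x / √(1 + x²) = tanh (arsinh x)` strictly increasing, so `W' > 0` wherever `Z > 0`.
Starting from `W 0 = δ > 0` and `Z 0 = 0`, each of `W`, `Z` pushes the other up: `W` stays positive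
on `[0, ∞)` (at a first zero `t` of `W`, `Z` and then `W` would be increasing on `[0, t]`), and then
`W` is strictly increasing there. The case `r < 0` follows by the symmetry `r ↦ -r` of the system.
-/

open Real Set

theorem Real.tanh_strictMono : StrictMono tanh := fun x y hxy => by
  rwa [← artanh_lt_artanh_iff ⟨neg_one_lt_tanh x, tanh_lt_one x⟩ ⟨neg_one_lt_tanh y, tanh_lt_one y⟩,
    artanh_tanh, artanh_tanh]

theorem strictMono_div_sqrt_one_add_sq : StrictMono fun x : ℝ => x / √(1 + x ^ 2) := by
  simpa only [Function.comp_def, tanh_arsinh] using tanh_strictMono.comp arsinh_strictMono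

theorem strictMonoOn_of_hasDerivAt_pos {D : Set ℝ} (hD : Convex ℝ D) {f f' : ℝ → ℝ}
    (hf : ∀ x, HasDerivAt f (f' x) x) (hf' : ∀ x ∈ interior D, 0 < f' x) : StrictMonoOn f D :=
  strictMonoOn_of_deriv_pos hD (fun x _ => (hf x).continuousAt.continuousWithinAt)
    fun x hx => (hf x).deriv ▸ hf' x hx

section Cooperative

variable {W Z W' Z' : ℝ → ℝ} (hW : ∀ r, HasDerivAt W (W' r) r) (hZ : ∀ r, HasDerivAt Z (Z' r) r)
  (hW' : ∀ r, 0 < Z r → 0 < W' r) (hZ' : ∀ r, 0 < W r → 0 < Z' r) (hZ0 : 0 ≤ Z 0)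
include hW hZ hW' hZ' hZ0

theorem strictMonoOn_Icc_of_cooperative {t : ℝ} (hWpos : ∀ s ∈ Ico 0 t, 0 < W s) :
    StrictMonoOn W (Icc 0 t) := by
  have hZmono : StrictMonoOn Z (Icc 0 t) := strictMonoOn_of_hasDerivAt_pos (convex_Icc 0 t) hZ
    fun s hs => hZ' s <| hWpos s <| Ioo_subset_Ico_self <| by rwa [interior_Icc] at hs
  refine strictMonoOn_of_hasDerivAt_pos (convex_Icc 0 t) hW fun s hs => hW' s ?_
  rw [interior_Icc] at hs
  exact hZ0.trans_lt <| hZmono (left_mem_Icc.2 (hs.1.le.trans hs.2.le)) (Ioo_subset_Icc_self hs) hs.1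

theorem pos_of_cooperative (hW0 : 0 < W 0) {s : ℝ} (hs : 0 ≤ s) : 0 < W s := by
  by_contra! hWs
  set S := {s | 0 ≤ s ∧ W s ≤ 0}
  have hS : IsClosed S :=
    isClosed_Ici.inter (isClosed_le (continuous_iff_continuousAt.2 fun r => (hW r).continuousAt)
      continuous_const)
  obtain ⟨⟨ht0, hWt⟩, hmin⟩ := hS.isLeast_csInf ⟨s, hs, hWs⟩ ⟨0, fun _ h => h.1⟩
  set t := sInf S
  have hWpos : ∀ r ∈ Ico 0 t, 0 < W r := fun r hr => by
    by_contra! hWr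
    exact (hmin ⟨hr.1, hWr⟩).not_gt hr.2
  have := (strictMonoOn_Icc_of_cooperative hW hZ hW' hZ' hZ0 hWpos).monotoneOn
    (left_mem_Icc.2 ht0) (right_mem_Icc.2 ht0) ht0
  linarith

theorem strictMonoOn_Ici_of_cooperative (hW0 : 0 < W 0) : StrictMonoOn W (Ici 0) :=
  fun _ ha _ hb hab =>
    strictMonoOn_Icc_of_cooperative hW hZ hW' hZ' hZ0
      (fun _ hr => pos_of_cooperative hW hZ hW' hZ' hZ0 hW0 hr.1)
      ⟨ha, hab.le⟩ (right_mem_Icc.2 hb) hab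

end Cooperative

def IsSessileSolution (κ : ℝ) (u v : ℝ → ℝ) : Prop :=
  ∀ r, HasDerivAt u (v r / √(1 + v r ^ 2)) r ∧ HasDerivAt v (κ * u r) r

namespace IsSessileSolution

variable {κ : ℝ} {u v uδ vδ : ℝ → ℝ}

theorem comp_neg (h : IsSessileSolution κ u v) :
    IsSessileSolution κ (fun r => u (-r)) (fun r => -v (-r)) := fun r => by
  constructor
  · simpa [Function.comp_def, neg_div, neg_sq] using (h (-r)).1.comp r (hasDerivAt_neg r)
  · simpa [Function.comp_def, Pi.neg_def] using ((h (-r)).2.comp r (hasDerivAt_neg r)).neg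

theorem strictMonoOn_sub (h : IsSessileSolution κ u v) (hδ : IsSessileSolution κ uδ vδ)
    (hκ : 0 < κ) (hv0 : v 0 = 0) (hvδ0 : vδ 0 = 0) (h0 : u 0 < uδ 0) :
    StrictMonoOn (fun r => uδ r - u r) (Ici 0) :=
  strictMonoOn_Ici_of_cooperative (Z := fun r => vδ r - v r)
    (fun r => (hδ r).1.sub (h r).1) (fun r => (hδ r).2.sub (h r).2)
    (fun _ hZ => sub_pos.2 (strictMono_div_sqrt_one_add_sq (sub_pos.1 hZ)))
    (fun _ hW => by rw [← mul_sub]; exact mul_pos hκ hW)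
    (by simp [hv0, hvδ0]) (sub_pos.2 h0)

end IsSessileSolution

theorem stmt_11_general (κ u₀ δ : ℝ) (hκ : 0 < κ) (hδ : 0 < δ)
    (u v uδ vδ : ℝ → ℝ)
    (hu : ∀ r : ℝ, HasDerivAt u (v r / Real.sqrt (1 + v r ^ 2)) r)
    (hv : ∀ r : ℝ, HasDerivAt v (κ * u r) r)
    (hu0 : u 0 = u₀) (hv0 : v 0 = 0)
    (huδ : ∀ r : ℝ, HasDerivAt uδ (vδ r / Real.sqrt (1 + vδ r ^ 2)) r)
    (hvδ : ∀ r : ℝ, HasDerivAt vδ (κ * uδ r) r)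
    (huδ0 : uδ 0 = u₀ + δ) (hvδ0 : vδ 0 = 0) :
    ∀ r : ℝ, r ≠ 0 → uδ r - δ > u r := by
  have hsol : IsSessileSolution κ u v := fun r => ⟨hu r, hv r⟩
  have hsolδ : IsSessileSolution κ uδ vδ := fun r => ⟨huδ r, hvδ r⟩
  have h0 : u 0 < uδ 0 := by linarith
  intro r hr
  rcases hr.lt_or_gt with hr | hr
  · have := hsol.comp_neg.strictMonoOn_sub hsolδ.comp_neg hκ (by simp [hv0]) (by simp [hvδ0])
      (by simpa using h0) self_mem_Ici (neg_nonneg.2 hr.le) (neg_pos.2 hr)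
    simp only [neg_zero, neg_neg] at this
    linarith
  · have := hsol.strictMonoOn_sub hsolδ hκ hv0 hvδ0 h0 self_mem_Ici hr.le hr
    linarith

/-- Separated dependence on the initial height: u(r;u₀+δ) - δ > u(r;u₀) for r ≠ 0. -/
theorem stmt_11 (κ u₀ δ : ℝ) (hκ : 0 < κ) (hu₀ : 0 < u₀) (hδ : 0 < δ)
    (u v uδ vδ : ℝ → ℝ)
    (hu : ∀ r : ℝ, HasDerivAt u (v r / Real.sqrt (1 + v r ^ 2)) r)
    (hv : ∀ r : ℝ, HasDerivAt v (κ * u r) r)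
    (hu0 : u 0 = u₀) (hv0 : v 0 = 0)
    (huδ : ∀ r : ℝ, HasDerivAt uδ (vδ r / Real.sqrt (1 + vδ r ^ 2)) r)
    (hvδ : ∀ r : ℝ, HasDerivAt vδ (κ * uδ r) r)
    (huδ0 : uδ 0 = u₀ + δ) (hvδ0 : vδ 0 = 0) :
    ∀ r : ℝ, r ≠ 0 → uδ r - δ > u r :=
  stmt_11_general κ u₀ δ hκ hδ u v uδ vδ hu hv hu0 hv0 huδ hvδ huδ0 hvδ0
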